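/- arXiv:2207.11015 — 2 statements merged into one kernel-verified Lean document; each statement's English description precedes it below -/
import Mathlib

section
/- Let q ≥ 2 and n ≥ 1 be integers and f, g : ℤ_q^n → ℤ_{2q}. Then C_f(u) + C_g(u) = 0 for all u ∈ ℤ_q^n with u ≠ 0 (i.e., f and g have complementary 2q-nega-autocorrelation) if and only if |N_f(u)|² + |N_g(u)|² = 2 for all u ∈ ℤ_q^n. -/
open Finset

/-- `ω = e^{πi/q}`, a primitive `2q`-th root of unity. -/
noncomputable def omg (q : ℕ) : ℂ := Complex.exp ((Real.pi : ℂ) * Complex.I / q)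

/-- `ξ = e^{2πi/q}`, a primitive `q`-th root of unity. -/
noncomputable def xiq (q : ℕ) : ℂ := Complex.exp (2 * (Real.pi : ℂ) * Complex.I / q)

/-- The `2q`-nega-Hadamard transform of `f : ℤ_q^n → ℤ_{2q}` at `u ∈ ℤ_q^n`:
`N_f(u) = q^{-n/2} Σ_x ω^{f(x)} ξ^{⟨x̂,û⟩} ω^{Σ_i x̂_i}`. -/
noncomputable def NHT (q n : ℕ) [NeZero q] (f : (Fin n → ZMod q) → ZMod (2 * q))
    (u : Fin n → ZMod q) : ℂ :=
  (Real.sqrt ((q : ℝ) ^ n) : ℂ)⁻¹ *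
    ∑ x : Fin n → ZMod q,
      omg q ^ (f x).val * xiq q ^ (∑ i, (x i).val * (u i).val) * omg q ^ (∑ i, (x i).val)

/-- The `2q`-nega-crosscorrelation of `f, g : ℤ_q^m → ℤ_{2q}` at `u`:
`C_{f,g}(u) = Σ_x ω^{f(x) − g(x+u)} (−1)^{n_q(x̂,û)}`. -/
noncomputable def negaCC (q m : ℕ) [NeZero q]
    (f g : (Fin m → ZMod q) → ZMod (2 * q)) (u : Fin m → ZMod q) : ℂ :=
  ∑ x : Fin m → ZMod q,
    omg q ^ (f x - g (x + u)).val *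
      (-1 : ℂ) ^ (Finset.univ.filter (fun i => q ≤ (x i).val + (u i).val)).card


/-!
The kernel of `N_f` factors as `∏ i, χ_{u_i}(x_i)` with `χ_a(b) = ξ^{b̂ â} ω^{b̂}`. These
one-dimensional characters are additive up to sign: `χ_a(b + c) = ± χ_a(b) χ_a(c)`, the sign
being `-1` exactly when `b̂ + ĉ ≥ q`, because a carry lowers the representative by `q` and
`ω^q = -1`. Expanding `|N_f(u)|²` and substituting `y = x + v` therefore turns it into
`q^{-n} Σ_v C_f(v) conj(K_u(v))`, where `K_u` is the kernel. The kernels are orthogonal, so by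
Fourier inversion `|N_f|² + |N_g|²` is constant iff `C_f + C_g` vanishes off `0`, and the constant
is `q^{-n} (C_f(0) + C_g(0)) = 2`.
-/

open ComplexConjugate

noncomputable def negaChar (q : ℕ) (a b : ZMod q) : ℂ := xiq q ^ (b.val * a.val) * omg q ^ b.val

noncomputable def negaKernel (q n : ℕ) (u x : Fin n → ZMod q) : ℂ := ∏ i, negaChar q (u i) (x i)

lemma negaKernel_zero_right {q n : ℕ} (u : Fin n → ZMod q) : negaKernel q n u 0 = 1 := by
  simp [negaKernel, negaChar]

section

variable {q n : ℕ} [NeZero q]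

lemma xiq_pow (m : ℕ) : xiq q ^ m = ZMod.stdAddChar (m : ZMod q) := by
  rw [ZMod.stdAddChar_apply, ZMod.toCircle_natCast, xiq, ← Complex.exp_nat_mul]
  ring_nf

lemma omg_pow (m : ℕ) : omg q ^ m = ZMod.stdAddChar (m : ZMod (2 * q)) := by
  rw [ZMod.stdAddChar_apply, ZMod.toCircle_natCast, omg, ← Complex.exp_nat_mul]
  have hq : (q : ℂ) ≠ 0 := Nat.cast_ne_zero.2 (NeZero.ne q)
  congr 1
  push_cast
  field_simp

lemma omg_pow_self : omg q ^ q = -1 := by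
  rw [omg, ← Complex.exp_nat_mul, ← Complex.exp_pi_mul_I]
  have hq : (q : ℂ) ≠ 0 := Nat.cast_ne_zero.2 (NeZero.ne q)
  congr 1
  field_simp

lemma norm_omg_pow (m : ℕ) : ‖omg q ^ m‖ = 1 := by
  rw [omg_pow, ZMod.stdAddChar_apply, Circle.norm_coe]

lemma omg_pow_val_mul_conj (a b : ZMod (2 * q)) :
    omg q ^ a.val * conj (omg q ^ b.val) = omg q ^ (a - b).val := by
  simp only [omg_pow, ZMod.natCast_zmod_val, ← AddChar.map_neg_eq_conj,
    ← AddChar.map_add_eq_mul, sub_eq_add_neg]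

lemma negaChar_mul_conj_self (a b : ZMod q) : negaChar q a b * conj (negaChar q a b) = 1 := by
  rw [Complex.mul_conj', negaChar, norm_mul, norm_omg_pow, xiq_pow, ZMod.stdAddChar_apply,
    Circle.norm_coe]
  norm_num

lemma negaChar_add (a b c : ZMod q) :
    negaChar q a (b + c) * (-1) ^ (if q ≤ b.val + c.val then 1 else 0) =
      negaChar q a b * negaChar q a c := by
  have hxiq : xiq q ^ ((b + c).val * a.val) =
      xiq q ^ (b.val * a.val) * xiq q ^ (c.val * a.val) := by
    simp only [xiq_pow, ← AddChar.map_add_eq_mul]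
    push_cast [ZMod.natCast_zmod_val]
    rw [add_mul]
  have homg : omg q ^ (b + c).val * (-1) ^ (if q ≤ b.val + c.val then 1 else 0) =
      omg q ^ b.val * omg q ^ c.val := by
    rw [← pow_add]
    split_ifs with hcarry
    · rw [ZMod.val_add_val_of_le hcarry, pow_add, omg_pow_self, pow_one]
    · rw [ZMod.val_add_of_lt (not_le.1 hcarry), pow_zero, mul_one]
  rw [negaChar, negaChar, negaChar, hxiq, mul_assoc, homg]
  ring

lemma sum_conj_negaChar_mul_negaChar (b c : ZMod q) :
    ∑ a, conj (negaChar q a b) * negaChar q a c = if b = c then (q : ℂ) else 0 := by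
  have hterm : ∀ a, conj (negaChar q a b) * negaChar q a c =
      conj (omg q ^ b.val) * omg q ^ c.val * ZMod.stdAddChar (a * (c - b)) := by
    intro a
    simp only [negaChar, xiq_pow, map_mul, ← AddChar.map_neg_eq_conj]
    rw [mul_sub, sub_eq_neg_add, AddChar.map_add_eq_mul]
    push_cast [ZMod.natCast_zmod_val]
    ring_nf
  simp only [hterm, ← mul_sum, AddChar.sum_mulShift _ (ZMod.isPrimitive_stdAddChar q),
    ZMod.card, sub_eq_zero, eq_comm (a := c)]
  split_ifs with hbc
  · rw [hbc, mul_comm (conj _), Complex.mul_conj', norm_omg_pow]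
    simp
  · simp

lemma NHT_eq_sum_negaKernel (f : (Fin n → ZMod q) → ZMod (2 * q)) (u : Fin n → ZMod q) :
    NHT q n f u = (Real.sqrt ((q : ℝ) ^ n) : ℂ)⁻¹ *
      ∑ x, omg q ^ (f x).val * negaKernel q n u x := by
  simp only [NHT, negaKernel, negaChar, prod_mul_distrib, prod_pow_eq_pow_sum, mul_assoc]

lemma negaKernel_add (u x v : Fin n → ZMod q) :
    negaKernel q n u (x + v) * (-1 : ℂ) ^ (univ.filter (fun i => q ≤ (x i).val + (v i).val)).card =
      negaKernel q n u x * negaKernel q n u v := by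
  rw [card_filter, ← prod_pow_eq_pow_sum]
  simp only [negaKernel, ← prod_mul_distrib, Pi.add_apply, negaChar_add]

lemma negaKernel_mul_conj_self (u x : Fin n → ZMod q) :
    negaKernel q n u x * conj (negaKernel q n u x) = 1 := by
  simp only [negaKernel, map_prod, ← prod_mul_distrib, negaChar_mul_conj_self, prod_const_one]

lemma negaKernel_mul_conj_add (u x v : Fin n → ZMod q) :
    negaKernel q n u x * conj (negaKernel q n u (x + v)) =
      (-1 : ℂ) ^ (univ.filter (fun i => q ≤ (x i).val + (v i).val)).card *
        conj (negaKernel q n u v) := by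
  set s : ℂ := (-1) ^ (univ.filter (fun i => q ≤ (x i).val + (v i).val)).card
  have hs : s * s = 1 := by rw [← mul_pow]; norm_num
  have hconj : conj (negaKernel q n u (x + v)) * s =
      conj (negaKernel q n u x) * conj (negaKernel q n u v) := by
    simpa [s] using congrArg conj (negaKernel_add u x v)
  linear_combination (-(negaKernel q n u x * conj (negaKernel q n u (x + v)))) * hs +
    (negaKernel q n u x * s) * hconj +
    (s * conj (negaKernel q n u v)) * negaKernel_mul_conj_self u x

lemma sum_conj_negaKernel_mul_negaKernel (v w : Fin n → ZMod q) :
    ∑ u, conj (negaKernel q n u v) * negaKernel q n u w = if v = w then (q : ℂ) ^ n else 0 := by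
  simp only [negaKernel, map_prod, ← prod_mul_distrib]
  rw [← Fintype.prod_sum (fun i a => conj (negaChar q a (v i)) * negaChar q a (w i))]
  simp only [sum_conj_negaChar_mul_negaChar, prod_ite_zero, prod_const, card_univ,
    Fintype.card_fin, mem_univ, forall_const, funext_iff]

lemma NHT_mul_conj (f : (Fin n → ZMod q) → ZMod (2 * q)) (u : Fin n → ZMod q) :
    NHT q n f u * conj (NHT q n f u) =
      ((q : ℂ) ^ n)⁻¹ * ∑ v, negaCC q n f f v * conj (negaKernel q n u v) := by
  set c : ℂ := (Real.sqrt ((q : ℝ) ^ n) : ℂ)⁻¹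
  have hc : c * conj c = ((q : ℂ) ^ n)⁻¹ := by
    rw [map_inv₀, Complex.conj_ofReal, ← mul_inv, ← Complex.ofReal_mul,
      Real.mul_self_sqrt (by positivity)]
    push_cast
    rfl
  have hterm : ∀ x v, omg q ^ (f x).val * negaKernel q n u x *
      conj (omg q ^ (f (x + v)).val * negaKernel q n u (x + v)) =
        omg q ^ (f x - f (x + v)).val *
          (-1 : ℂ) ^ (univ.filter (fun i => q ≤ (x i).val + (v i).val)).card *
          conj (negaKernel q n u v) := by
    intro x v
    rw [map_mul, mul_mul_mul_comm, omg_pow_val_mul_conj, negaKernel_mul_conj_add, mul_assoc]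
  rw [NHT_eq_sum_negaKernel, map_mul, map_sum]
  calc c * (∑ x, omg q ^ (f x).val * negaKernel q n u x) *
        (conj c * ∑ y, conj (omg q ^ (f y).val * negaKernel q n u y))
      = c * conj c * ∑ x, ∑ v, omg q ^ (f x).val * negaKernel q n u x *
          conj (omg q ^ (f (x + v)).val * negaKernel q n u (x + v)) := by
        rw [mul_mul_mul_comm, sum_mul_sum]
        congr 1
        refine sum_congr rfl fun x _ => ?_
        exact (Fintype.sum_equiv (Equiv.addLeft x) _ _ fun v => rfl).symm
    _ = ((q : ℂ) ^ n)⁻¹ * ∑ v, negaCC q n f f v * conj (negaKernel q n u v) := by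
        simp only [hc, hterm, negaCC, sum_mul]
        rw [sum_comm]

lemma negaCC_self_zero (f : (Fin n → ZMod q) → ZMod (2 * q)) :
    negaCC q n f f 0 = (q : ℂ) ^ n := by
  have hno_carry : ∀ x : Fin n → ZMod q, univ.filter (fun i => q ≤ (x i).val) = ∅ :=
    fun x => filter_false_of_mem fun i _ => not_le.2 (ZMod.val_lt (x i))
  simp [negaCC, hno_carry]

lemma forall_sum_mul_conj_negaKernel_eq_iff (S : (Fin n → ZMod q) → ℂ) :
    (∀ u, ∑ v, S v * conj (negaKernel q n u v) = S 0) ↔ ∀ v, v ≠ 0 → S v = 0 := by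
  constructor
  · intro h w hw
    have hinv : ∑ u, (∑ v, S v * conj (negaKernel q n u v)) * negaKernel q n u w =
        S w * (q : ℂ) ^ n := by
      simp only [sum_mul, mul_assoc]
      rw [sum_comm]
      simp only [← mul_sum, sum_conj_negaKernel_mul_negaKernel, mul_ite, mul_zero,
        sum_ite_eq', mem_univ, if_true]
    have hconst : ∑ u, S 0 * negaKernel q n u w = 0 := by
      simpa [← mul_sum, negaKernel_zero_right, Ne.symm hw] using
        congrArg (S 0 * ·) (sum_conj_negaKernel_mul_negaKernel (q := q) 0 w)
    simp only [h] at hinv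
    rw [hconst] at hinv
    exact (mul_eq_zero.1 hinv.symm).resolve_right
      (pow_ne_zero _ (Nat.cast_ne_zero.2 (NeZero.ne q)))
  · intro h u
    rw [sum_eq_single 0 (fun v _ hv => by rw [h v hv, zero_mul]) (by simp),
      negaKernel_zero_right, map_one, mul_one]

end

theorem complementary_negaAC_iff_general (q n : ℕ) [NeZero q]
    (f g : (Fin n → ZMod q) → ZMod (2 * q)) :
    (∀ u : Fin n → ZMod q, u ≠ 0 → negaCC q n f f u + negaCC q n g g u = 0) ↔
      (∀ u : Fin n → ZMod q,
        ‖NHT q n f u‖ ^ 2 + ‖NHT q n g u‖ ^ 2 = 2) := by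
  set S : (Fin n → ZMod q) → ℂ := fun v => negaCC q n f f v + negaCC q n g g v
  have hS0 : S 0 = 2 * (q : ℂ) ^ n := by simp only [S, negaCC_self_zero]; ring
  have hq : (q : ℂ) ^ n ≠ 0 := pow_ne_zero _ (Nat.cast_ne_zero.2 (NeZero.ne q))
  rw [← forall_sum_mul_conj_negaKernel_eq_iff S]
  refine forall_congr' fun u => ?_
  have hspec : ((‖NHT q n f u‖ ^ 2 + ‖NHT q n g u‖ ^ 2 : ℝ) : ℂ) =
      ((q : ℂ) ^ n)⁻¹ * ∑ v, S v * conj (negaKernel q n u v) := by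
    push_cast
    rw [← Complex.mul_conj', ← Complex.mul_conj', NHT_mul_conj, NHT_mul_conj, ← mul_add,
      ← sum_add_distrib]
    simp only [S, add_mul]
  rw [← Complex.ofReal_inj, hspec, hS0, inv_mul_eq_iff_eq_mul₀ hq]
  push_cast
  rw [mul_comm]

/-- `f` and `g` have complementary `2q`-nega-autocorrelation
(`C_f(u) + C_g(u) = 0` for all nonzero `u`) iff `|N_f(u)|² + |N_g(u)|² = 2` for all `u`. -/
theorem complementary_negaAC_iff (q n : ℕ) [NeZero q] (hq : 2 ≤ q) (hn : 1 ≤ n)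
    (f g : (Fin n → ZMod q) → ZMod (2 * q)) :
    (∀ u : Fin n → ZMod q, u ≠ 0 → negaCC q n f f u + negaCC q n g g u = 0) ↔
      (∀ u : Fin n → ZMod q,
        ‖NHT q n f u‖ ^ 2 + ‖NHT q n g u‖ ^ 2 = 2) :=
  complementary_negaAC_iff_general q n f g
end

section
/- Let q ≥ 2 be an even integer and n ≥ 1. Then the function f : ℤ_q^n → ℤ_{2q} defined by f(x_1,…,x_n) = x̂_1² + ⋯ + x̂_n² − x̂_1 − ⋯ − x̂_n (the integer value reduced modulo 2q) is 2q-negabent. -/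
/-!
Write `χ` for the standard additive character of `ℤ_{2q}`, so that `ω^k = χ(k)` and `ξ^k = χ(2k)`.
Since `q` is even, `L(a) = â² mod 2q` satisfies `L(a + b) = L(a) + L(b) + 2âb̂` on `ℤ_q`, although
`(a + b)^ ≠ â + b̂` in general. Hence the summand of `N_f(u)` is `∏ᵢ χ(L(xᵢ + uᵢ) - L(uᵢ))`, and
`N_f(u)` factors as `q^{-n/2} ∏ᵢ χ(-L(uᵢ)) G` with the Gauss sum `G = Σₐ χ(L a)`. Expanding
`|G|² = Σ_d χ(L d) Σₐ ξ^{âd̂}` and using orthogonality of characters gives `|G|² = q`.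
-/

open Finset

lemma AddChar.map_sum_eq_prod {ι A M : Type*} [AddCommMonoid A] [CommMonoid M]
    (ψ : AddChar A M) (s : Finset ι) (f : ι → A) : ψ (∑ i ∈ s, f i) = ∏ i ∈ s, ψ (f i) := by
  classical
  induction s using Finset.induction_on with
  | empty => simp
  | insert i s hi ih => rw [sum_insert hi, prod_insert hi, AddChar.map_add_eq_mul, ih]

namespace ZMod

lemma conj_stdAddChar {N : ℕ} [NeZero N] (x : ZMod N) :
    (starRingEnd ℂ) (stdAddChar x) = stdAddChar (-x) := by
  rw [stdAddChar_apply, stdAddChar_apply, ← Circle.coe_inv_eq_conj, AddChar.map_neg_eq_inv]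

lemma stdAddChar_two_mul_natCast {q : ℕ} [NeZero q] (k : ℕ) :
    stdAddChar (2 * (k : ZMod (2 * q))) = stdAddChar (k : ZMod q) := by
  have h := stdAddChar_coe (N := 2 * q) (2 * k)
  have h' := stdAddChar_coe (N := q) k
  push_cast at h h'
  rw [h, h']
  have hq : (q : ℂ) ≠ 0 := Nat.cast_ne_zero.mpr (NeZero.ne q)
  congr 1
  field_simp

end ZMod

lemma xiq_eq_omg_sq (q : ℕ) : xiq q = omg q ^ 2 := by
  rw [omg, xiq, ← Complex.exp_nat_mul]
  congr 1
  push_cast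
  ring_nf

lemma omg_pow_eq_stdAddChar {q : ℕ} [NeZero q] (k : ℕ) :
    omg q ^ k = ZMod.stdAddChar (k : ZMod (2 * q)) := by
  rw [← Int.cast_natCast, ZMod.stdAddChar_coe, omg, ← Complex.exp_nat_mul]
  have hq : (q : ℂ) ≠ 0 := Nat.cast_ne_zero.mpr (NeZero.ne q)
  congr 1
  push_cast
  field_simp

def liftSq (q : ℕ) (a : ZMod q) : ZMod (2 * q) := (a.val ^ 2 : ℕ)

section GaussSum

open ZMod

variable {q : ℕ} [NeZero q]

lemma liftSq_add (heven : Even q) (a b : ZMod q) :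
    liftSq q (a + b) = liftSq q a + liftSq q b + 2 * a.val * b.val := by
  obtain ⟨m, hm⟩ := heven
  set k := (a.val + b.val) / q
  have hsum : a.val + b.val = (a + b).val + q * k := by
    rw [ZMod.val_add]; exact (Nat.mod_add_div _ _).symm
  have hsum' := congrArg (fun n : ℕ => (n : ZMod (2 * q))) hsum
  have hm' := congrArg (fun n : ℕ => (n : ZMod (2 * q))) hm
  have h2q : ((2 * q : ℕ) : ZMod (2 * q)) = 0 := ZMod.natCast_self _
  push_cast at hsum' hm' h2q
  unfold liftSq
  push_cast
  -- with `s = (a + b).val` and `q = 2m`: `(s + qk)² = s² + 2q(sk + mk²)`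
  linear_combination (-((a.val : ZMod (2 * q)) + b.val + (a + b).val + q * k)) * hsum'
    - ((a + b).val * k + m * k ^ 2) * h2q - q * k ^ 2 * hm'

lemma sum_stdAddChar_liftSq_mul_conj (heven : Even q) :
    (∑ a : ZMod q, stdAddChar (liftSq q a)) *
      (starRingEnd ℂ) (∑ a : ZMod q, stdAddChar (liftSq q a)) = q := by
  have shift (a d : ZMod q) : stdAddChar (liftSq q (a + d) - liftSq q a)
      = stdAddChar (liftSq q d) * stdAddChar (a * d) := by
    rw [liftSq_add heven, add_assoc, add_sub_cancel_left, AddChar.map_add_eq_mul, mul_assoc,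
      ← Nat.cast_mul, stdAddChar_two_mul_natCast, Nat.cast_mul, natCast_zmod_val, natCast_zmod_val]
  calc _ = ∑ a : ZMod q, ∑ b : ZMod q, stdAddChar (liftSq q b - liftSq q a) := by
        simp only [map_sum, conj_stdAddChar, sum_mul_sum, ← AddChar.map_add_eq_mul, sub_eq_add_neg]
        exact sum_comm
    _ = ∑ a : ZMod q, ∑ d : ZMod q, stdAddChar (liftSq q (a + d) - liftSq q a) :=
        sum_congr rfl fun a _ => (Equiv.sum_comp (Equiv.addLeft a) _).symm
    _ = ∑ d : ZMod q, stdAddChar (liftSq q d) * ∑ a : ZMod q, stdAddChar (a * d) := by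
        simp only [shift, mul_sum]
        exact sum_comm
    _ = q := by
        simp [AddChar.sum_mulShift _ (isPrimitive_stdAddChar q), liftSq]

lemma norm_sum_stdAddChar_liftSq (heven : Even q) :
    ‖∑ a : ZMod q, stdAddChar (liftSq q a)‖ = √q := by
  have h := sum_stdAddChar_liftSq_mul_conj heven
  rw [Complex.mul_conj, Complex.normSq_eq_norm_sq] at h
  have h' : ‖∑ a : ZMod q, stdAddChar (liftSq q a)‖ ^ 2 = q := by exact_mod_cast h
  rw [← h', Real.sqrt_sq (norm_nonneg _)]

lemma norm_sum_stdAddChar_liftSq_add_sub (heven : Even q) (v : ZMod q) :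
    ‖∑ a : ZMod q, stdAddChar (liftSq q (a + v) - liftSq q v)‖ = √q := by
  simp only [AddChar.map_sub_eq_div, ← sum_div]
  rw [norm_div, stdAddChar_apply, Circle.norm_coe, div_one, ← norm_sum_stdAddChar_liftSq heven]
  exact congrArg norm (Equiv.sum_comp (Equiv.addRight v) fun a => stdAddChar (liftSq q a))

lemma nht_summand_quadratic_eq_prod {n : ℕ} (heven : Even q) (x u : Fin n → ZMod q) :
    omg q ^ (((∑ i, ((x i).val : ℤ) ^ 2 - ∑ i, ((x i).val : ℤ) : ℤ) : ZMod (2 * q))).val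
        * xiq q ^ (∑ i, (x i).val * (u i).val) * omg q ^ (∑ i, (x i).val)
      = ∏ i, stdAddChar (liftSq q (x i + u i) - liftSq q (u i)) := by
  rw [xiq_eq_omg_sq, ← pow_mul, omg_pow_eq_stdAddChar, omg_pow_eq_stdAddChar,
    omg_pow_eq_stdAddChar, ← AddChar.map_add_eq_mul, ← AddChar.map_add_eq_mul,
    ← AddChar.map_sum_eq_prod, natCast_zmod_val]
  congr 1
  simp only [liftSq_add heven, add_right_comm _ (liftSq q _), add_sub_cancel_right]
  simp only [liftSq, sum_add_distrib, mul_assoc, ← mul_sum]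
  push_cast
  ring

end GaussSum

theorem quadratic_negabent_general (q n : ℕ) [NeZero q] (heven : Even q) :
    ∀ u : Fin n → ZMod q,
      ‖NHT q n
        (fun x => ((∑ i, ((x i).val : ℤ) ^ 2 - ∑ i, ((x i).val : ℤ) : ℤ) : ZMod (2 * q))) u‖
        = 1 := by
  intro u
  have hsqrt : ∏ _i : Fin n, √(q : ℝ) = √((q : ℝ) ^ n) := by
    rw [← Real.sqrt_prod _ fun _ _ => q.cast_nonneg, prod_const, card_univ, Fintype.card_fin]
  have hpos : 0 < √((q : ℝ) ^ n) := Real.sqrt_pos.mpr (pow_pos (by simp [NeZero.pos]) n)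
  rw [NHT, sum_congr rfl fun x _ => nht_summand_quadratic_eq_prod heven x u,
    ← Fintype.prod_sum fun i a => ZMod.stdAddChar (liftSq q (a + u i) - liftSq q (u i)),
    norm_mul, norm_prod]
  simp only [norm_sum_stdAddChar_liftSq_add_sub heven, hsqrt, norm_inv, Complex.norm_real,
    Real.norm_of_nonneg hpos.le, inv_mul_cancel₀ hpos.ne']

/-- For even `q ≥ 2`, the function
`f(x) = x̂_1² + ⋯ + x̂_n² − x̂_1 − ⋯ − x̂_n (mod 2q)` is `2q`-negabent. -/
theorem quadratic_negabent (q n : ℕ) [NeZero q] (hq : 2 ≤ q) (heven : Even q) (hn : 1 ≤ n) :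
    ∀ u : Fin n → ZMod q,
      ‖NHT q n
        (fun x => ((∑ i, ((x i).val : ℤ) ^ 2 - ∑ i, ((x i).val : ℤ) : ℤ) : ZMod (2 * q))) u‖
        = 1 :=
  quadratic_negabent_general q n heven
end
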